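/- arXiv:2011.06379 — 2 statements merged into one kernel-verified Lean document; each statement's English description precedes it below -/
import Mathlib

section
/- Let 0 < ε < 1. Every function f : ℂ × ℂ → ℂ that is holomorphic on the Hartogs figure H_ε extends holomorphically to the bidisk D: there exists F : ℂ × ℂ → ℂ holomorphic on D (i.e. DifferentiableOn ℂ F D) such that F = f on H_ε. -/
/-!
Fix `1 - ε < r < 1`. The Cauchy integral in the second variable,
`F (z, w) = (2πi)⁻¹ ∮_{|ζ| = r} f (z, ζ) / (ζ - w) dζ`, only uses values of `f` on
`{|z| < 1} × {|ζ| = r} ⊆ H_ε`, so it is defined, and holomorphic by differentiation under the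
integral sign, on all of `{|z| < 1} × {|w| < r}`; the derivative of `f` needed there is bounded
near the circle by Cauchy estimates. For `|z| < ε` it reproduces `f` by the
one-variable Cauchy formula; by the identity theorem in `z` it then agrees with `f` on the whole
overlap with `H_ε`, so `F` and `f` glue to a holomorphic function on the bidisk.
-/

/-- The open unit bidisk in `ℂ × ℂ`. -/
def bidisk : Set (ℂ × ℂ) := {p | ‖p.1‖ < 1 ∧ ‖p.2‖ < 1}

/-- The Hartogs figure `H_ε` inside the bidisk. -/
def hartogsFigure (ε : ℝ) : Set (ℂ × ℂ) :=
  {p | (‖p.1‖ < 1 ∧ ‖p.2‖ < 1) ∧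
    (‖p.1‖ < ε ∨ ‖p.2‖ > 1 - ε)}

open Complex Metric Set MeasureTheory Real Topology

theorem hasFDerivAt_circleIntegral_of_dominated_of_fderiv_le
    {H E : Type*} [NormedAddCommGroup H] [NormedSpace ℂ H]
    [NormedAddCommGroup E] [NormedSpace ℂ E] [CompleteSpace E]
    {K : H → ℂ → E} {K' : H → ℂ → H →L[ℂ] E} {c : ℂ} {R C : ℝ} {x₀ : H} {s : Set H}
    (hs : s ∈ 𝓝 x₀) (hK : ∀ x ∈ s, ContinuousOn (K x) (sphere c |R|))
    (hK'_meas : AEStronglyMeasurable (fun θ => K' x₀ (circleMap c R θ)))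
    (h_bound : ∀ x ∈ s, ∀ ζ ∈ sphere c |R|, ‖K' x ζ‖ ≤ C)
    (h_diff : ∀ x ∈ s, ∀ ζ ∈ sphere c |R|, HasFDerivAt (K · ζ) (K' x ζ) x) :
    HasFDerivAt (fun x => ∮ ζ in C(c, R), K x ζ) (∮ ζ in C(c, R), K' x₀ ζ) x₀ := by
  have hK_cont : ∀ x ∈ s, Continuous fun θ => deriv (circleMap c R) θ • K x (circleMap c R θ) :=
    fun x hx => by
      simp only [deriv_circleMap]
      exact ((continuous_circleMap 0 R).mul continuous_const).smul
        ((hK x hx).comp_continuous (continuous_circleMap c R) (circleMap_mem_sphere' c R))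
  refine intervalIntegral.hasFDerivAt_integral_of_dominated_of_fderiv_le (bound := fun _ => |R| * C)
    (F := fun x θ => deriv (circleMap c R) θ • K x (circleMap c R θ))
    (F' := fun x θ => deriv (circleMap c R) θ • K' x (circleMap c R θ))
    hs ?_ ((hK_cont x₀ (mem_of_mem_nhds hs)).intervalIntegrable _ _) ?_ ?_
    intervalIntegrable_const ?_
  · filter_upwards [hs] with x hx
    exact (hK_cont x hx).aestronglyMeasurable
  · simp only [deriv_circleMap]
    exact (((continuous_circleMap 0 R).mul continuous_const).aestronglyMeasurable.smul
      hK'_meas).restrict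
  · refine ae_of_all _ fun θ _ x hx => ?_
    rw [norm_smul, deriv_circleMap, norm_mul, norm_circleMap_zero, norm_I, mul_one]
    exact mul_le_mul_of_nonneg_left (h_bound x hx _ (circleMap_mem_sphere' c R θ)) (abs_nonneg R)
  · exact ae_of_all _ fun θ _ x hx =>
      (h_diff x hx _ (circleMap_mem_sphere' c R θ)).const_smul _

theorem norm_fderiv_le_of_forall_mem_ball_norm_le {E F : Type*} [NormedAddCommGroup E]
    [NormedSpace ℂ E] [NormedAddCommGroup F] [NormedSpace ℂ F] {f : E → F} {x : E} {r M : ℝ}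
    (hr : 0 < r) (hd : DifferentiableOn ℂ f (ball x r)) (hM : ∀ y ∈ ball x r, ‖f y‖ ≤ M) :
    ‖fderiv ℂ f x‖ ≤ 2 * M / r := by
  refine norm_fderiv_le_div_of_mapsTo_ball hd (fun y hy => ?_) hr
  rw [mem_closedBall, dist_eq_norm]
  linarith [norm_sub_le (f y) (f x), hM y hy, hM x (mem_ball_self hr)]

theorem IsCompact.exists_thickening_forall_norm_fderiv_le {E F : Type*} [NormedAddCommGroup E]
    [NormedSpace ℂ E] [ProperSpace E] [NormedAddCommGroup F] [NormedSpace ℂ F]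
    {f : E → F} {K W : Set E} (hK : IsCompact K) (hW : IsOpen W)
    (hf : DifferentiableOn ℂ f W) (hKW : K ⊆ W) :
    ∃ δ > 0, ∃ M, ∀ q ∈ thickening δ K,
      DifferentiableAt ℂ f q ∧ ‖f q‖ ≤ M ∧ ‖fderiv ℂ f q‖ ≤ M := by
  obtain ⟨δ, hδ, hδW⟩ := hK.exists_cthickening_subset_open hW hKW
  obtain ⟨M, hM⟩ := hK.cthickening.exists_bound_of_continuousOn (hf.continuousOn.mono hδW)
  have hball : ∀ q ∈ thickening (δ / 2) K, ball q (δ / 2) ⊆ cthickening δ K := fun q hq =>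
    calc ball q (δ / 2) ⊆ thickening (δ / 2) (thickening (δ / 2) K) := ball_subset_thickening hq _
      _ ⊆ thickening (δ / 2 + δ / 2) K :=
        thickening_thickening_subset (δ / 2) (δ / 2) K
      _ ⊆ cthickening δ K := by rw [add_halves]; exact thickening_subset_cthickening δ K
  refine ⟨δ / 2, half_pos hδ, max M (2 * M / (δ / 2)), fun q hq => ⟨?_, ?_, ?_⟩⟩
  · exact hf.differentiableAt (hW.mem_nhds (hδW (hball q hq (mem_ball_self (half_pos hδ)))))
  · exact (hM q (hball q hq (mem_ball_self (half_pos hδ)))).trans (le_max_left _ _)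
  · exact (norm_fderiv_le_of_forall_mem_ball_norm_le (half_pos hδ)
      (hf.mono ((hball q hq).trans hδW)) fun y hy => hM y (hball q hq hy)).trans (le_max_right _ _)

noncomputable section

def cauchyIntegrandSnd (f : ℂ × ℂ → ℂ) (p : ℂ × ℂ) (ζ : ℂ) : ℂ :=
  (ζ - p.2)⁻¹ • f (p.1, ζ)

def cauchyIntegrandSndFDeriv (f : ℂ × ℂ → ℂ) (p : ℂ × ℂ) (ζ : ℂ) : ℂ × ℂ →L[ℂ] ℂ :=
  (ζ - p.2)⁻¹ • (fderiv ℂ f (p.1, ζ)).comp ((ContinuousLinearMap.fst ℂ ℂ ℂ).prod 0) +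
    ((ζ - p.2)⁻¹ ^ 2 * f (p.1, ζ)) • ContinuousLinearMap.snd ℂ ℂ ℂ

def cauchyIntegralSnd (f : ℂ × ℂ → ℂ) (c : ℂ) (R : ℝ) (p : ℂ × ℂ) : ℂ :=
  (2 * π * I : ℂ)⁻¹ • ∮ ζ in C(c, R), cauchyIntegrandSnd f p ζ

end

theorem hasFDerivAt_cauchyIntegrandSnd {f : ℂ × ℂ → ℂ} {p : ℂ × ℂ} {ζ : ℂ}
    (hf : DifferentiableAt ℂ f (p.1, ζ)) (hζ : ζ ≠ p.2) :
    HasFDerivAt (cauchyIntegrandSnd f · ζ) (cauchyIntegrandSndFDeriv f p ζ) p := by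
  have hinv : HasFDerivAt (fun q : ℂ × ℂ => (ζ - q.2)⁻¹)
      ((ζ - p.2)⁻¹ ^ 2 • ContinuousLinearMap.snd ℂ ℂ ℂ) p :=
    ((hasDerivAt_inv (sub_ne_zero.2 hζ)).comp_hasFDerivAt p
      ((hasFDerivAt_const ζ p).sub (hasFDerivAt_snd (𝕜 := ℂ)))).congr_fderiv
      (by ext <;> simp)
  have hslice : HasFDerivAt (fun q : ℂ × ℂ => f (q.1, ζ))
      ((fderiv ℂ f (p.1, ζ)).comp ((ContinuousLinearMap.fst ℂ ℂ ℂ).prod 0)) p :=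
    hf.hasFDerivAt.comp p (hasFDerivAt_fst.prodMk (hasFDerivAt_const ζ p))
  exact (hinv.smul hslice).congr_fderiv (by ext <;> simp [cauchyIntegrandSndFDeriv, mul_comm])

theorem norm_cauchyIntegrandSndFDeriv_le {f : ℂ × ℂ → ℂ} {p : ℂ × ℂ} {ζ : ℂ} {η D M : ℝ}
    (hη : 0 < η) (hζ : η ≤ ‖ζ - p.2‖) (hD : ‖fderiv ℂ f (p.1, ζ)‖ ≤ D)
    (hM : ‖f (p.1, ζ)‖ ≤ M) :
    ‖cauchyIntegrandSndFDeriv f p ζ‖ ≤ η⁻¹ * D + η⁻¹ ^ 2 * M := by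
  have hinv : ‖(ζ - p.2)⁻¹‖ ≤ η⁻¹ := by rw [norm_inv]; exact inv_anti₀ hη hζ
  have hfst : ‖(ContinuousLinearMap.fst ℂ ℂ ℂ).prod (0 : ℂ × ℂ →L[ℂ] ℂ)‖ ≤ 1 := by
    rw [ContinuousLinearMap.opNorm_prod, Prod.norm_def, norm_zero]
    exact max_le (ContinuousLinearMap.norm_fst_le ℂ ℂ ℂ) zero_le_one
  have hcomp : ‖(fderiv ℂ f (p.1, ζ)).comp ((ContinuousLinearMap.fst ℂ ℂ ℂ).prod 0)‖ ≤ D :=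
    (ContinuousLinearMap.opNorm_comp_le _ _).trans
      (by simpa using mul_le_mul hD hfst (norm_nonneg _) ((norm_nonneg _).trans hD))
  have hM0 : 0 ≤ M := (norm_nonneg _).trans hM
  refine (norm_add_le _ _).trans (add_le_add ?_ ?_)
  · rw [norm_smul]
    exact mul_le_mul hinv hcomp (norm_nonneg _) (by positivity)
  · rw [norm_smul, norm_mul, norm_pow]
    calc ‖(ζ - p.2)⁻¹‖ ^ 2 * ‖f (p.1, ζ)‖ * ‖ContinuousLinearMap.snd ℂ ℂ ℂ‖
        ≤ η⁻¹ ^ 2 * M * 1 := by gcongr; exact ContinuousLinearMap.norm_snd_le ℂ ℂ ℂ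
      _ = η⁻¹ ^ 2 * M := mul_one _

theorem aestronglyMeasurable_cauchyIntegrandSndFDeriv_circleMap {f : ℂ × ℂ → ℂ} {c z w : ℂ}
    {R : ℝ} (hf : ContinuousOn f ({z} ×ˢ sphere c |R|)) (hw : w ∈ ball c R) :
    AEStronglyMeasurable (fun θ => cauchyIntegrandSndFDeriv f (z, w) (circleMap c R θ)) := by
  borelize (ℂ × ℂ →L[ℂ] ℂ)
  have hfderiv : StronglyMeasurable fun θ => fderiv ℂ f (z, circleMap c R θ) :=
    ((measurable_fderiv ℂ f).comp (by fun_prop : Continuous fun θ =>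
      (z, circleMap c R θ)).measurable).stronglyMeasurable
  have hinv := continuous_circleMap_inv hw
  have hf_circle : Continuous fun θ => f (z, circleMap c R θ) :=
    hf.comp_continuous (by fun_prop) fun θ =>
      mk_mem_prod (mem_singleton z) (circleMap_mem_sphere' c R θ)
  exact ((hinv.stronglyMeasurable.smul ((by fun_prop : Continuous fun T : ℂ × ℂ →L[ℂ] ℂ =>
    T.comp ((ContinuousLinearMap.fst ℂ ℂ ℂ).prod 0)).comp_stronglyMeasurable hfderiv)).add
      (((hinv.pow 2).mul hf_circle).smul continuous_const).stronglyMeasurable).aestronglyMeasurable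

theorem mk_mem_thickening_singleton_prod {α β : Type*} [PseudoMetricSpace α]
    [PseudoMetricSpace β] {x x₀ : α} {y : β} {S : Set β} {δ : ℝ} (hx : dist x x₀ < δ)
    (hy : y ∈ S) : (x, y) ∈ thickening δ ({x₀} ×ˢ S) := by
  refine ball_subset_thickening (mk_mem_prod (mem_singleton x₀) hy) δ ?_
  rwa [mem_ball, Prod.dist_eq, dist_self, max_eq_left dist_nonneg]

theorem differentiableOn_cauchyIntegralSnd {f : ℂ × ℂ → ℂ} {W : Set (ℂ × ℂ)} (hW : IsOpen W)
    (hf : DifferentiableOn ℂ f W) {U : Set ℂ} {c : ℂ} {R : ℝ} (hU : U ×ˢ sphere c R ⊆ W) :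
    DifferentiableOn ℂ (cauchyIntegralSnd f c R) (U ×ˢ ball c R) := by
  rintro ⟨z₀, w₀⟩ ⟨hz₀, hw₀⟩
  have hsphere : sphere c |R| = sphere c R := by rw [abs_of_pos (pos_of_mem_ball hw₀)]
  have hK : ({z₀} ×ˢ sphere c R : Set (ℂ × ℂ)) ⊆ W :=
    (prod_mono (singleton_subset_iff.2 hz₀) subset_rfl).trans hU
  obtain ⟨δ, hδ, M, hM⟩ :=
    (isCompact_singleton.prod (isCompact_sphere c R)).exists_thickening_forall_norm_fderiv_le
      hW hf hK
  set ρ := min δ ((R - dist w₀ c) / 2)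
  have hρ : 0 < ρ := lt_min hδ (half_pos (sub_pos.2 (mem_ball.1 hw₀)))
  have hnear : ∀ p ∈ ball (z₀, w₀) ρ, ∀ ζ ∈ sphere c |R|, (DifferentiableAt ℂ f (p.1, ζ) ∧
      ‖f (p.1, ζ)‖ ≤ M ∧ ‖fderiv ℂ f (p.1, ζ)‖ ≤ M) ∧ ρ ≤ ‖ζ - p.2‖ := by
    intro p hp ζ hζ
    rw [hsphere, mem_sphere] at hζ
    rw [mem_ball, Prod.dist_eq, max_lt_iff] at hp
    refine ⟨hM _ (mk_mem_thickening_singleton_prod (hp.1.trans_le (min_le_left _ _)) hζ), ?_⟩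
    rw [← dist_eq_norm]
    linarith [dist_triangle ζ p.2 c, dist_triangle p.2 w₀ c, dist_comm ζ p.2, hp.2,
      min_le_right δ ((R - dist w₀ c) / 2)]
  have hne : ∀ p ∈ ball (z₀, w₀) ρ, ∀ ζ ∈ sphere c |R|, ζ ≠ p.2 := fun p hp ζ hζ =>
    sub_ne_zero.1 (norm_pos_iff.1 (hρ.trans_le (hnear p hp ζ hζ).2))
  have hcont : ∀ p ∈ ball (z₀, w₀) ρ, ContinuousOn (cauchyIntegrandSnd f p) (sphere c |R|) :=
    fun p hp =>
      ((continuousOn_id.sub continuousOn_const).inv₀ fun ζ hζ => sub_ne_zero.2 (hne p hp ζ hζ)).smul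
        fun ζ hζ => ((hnear p hp ζ hζ).1.1.continuousAt.comp
          (by fun_prop : Continuous fun ζ : ℂ => (p.1, ζ)).continuousAt).continuousWithinAt
  have hmeas := aestronglyMeasurable_cauchyIntegrandSndFDeriv_circleMap
    (hf.continuousOn.mono (hsphere ▸ hK)) hw₀
  have hbound : ∀ p ∈ ball (z₀, w₀) ρ, ∀ ζ ∈ sphere c |R|,
      ‖cauchyIntegrandSndFDeriv f p ζ‖ ≤ ρ⁻¹ * M + ρ⁻¹ ^ 2 * M := fun p hp ζ hζ =>
    norm_cauchyIntegrandSndFDeriv_le hρ (hnear p hp ζ hζ).2 (hnear p hp ζ hζ).1.2.2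
      (hnear p hp ζ hζ).1.2.1
  have hderiv : ∀ p ∈ ball (z₀, w₀) ρ, ∀ ζ ∈ sphere c |R|,
      HasFDerivAt (cauchyIntegrandSnd f · ζ) (cauchyIntegrandSndFDeriv f p ζ) p :=
    fun p hp ζ hζ => hasFDerivAt_cauchyIntegrandSnd (hnear p hp ζ hζ).1.1 (hne p hp ζ hζ)
  have key := hasFDerivAt_circleIntegral_of_dominated_of_fderiv_le
    (ball_mem_nhds _ hρ) hcont hmeas hbound hderiv
  exact (key.differentiableAt.const_smul (2 * π * I : ℂ)⁻¹).differentiableWithinAt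

theorem cauchyIntegralSnd_eq {f : ℂ × ℂ → ℂ} {c : ℂ} {R : ℝ} {z w : ℂ}
    (hf : DifferentiableOn ℂ (fun ζ => f (z, ζ)) (closedBall c R)) (hw : w ∈ ball c R) :
    cauchyIntegralSnd f c R (z, w) = f (z, w) :=
  (hf.mono closure_ball_subset_closedBall).diffContOnCl
    |>.two_pi_i_inv_smul_circleIntegral_sub_inv_smul hw

theorem eqOn_prod_of_eqOn_nhds_prod {E : Type*} [NormedAddCommGroup E] [NormedSpace ℂ E]
    [CompleteSpace E] {F G : ℂ × ℂ → E} {U V W : Set ℂ} (hU : IsOpen U) (hU' : IsPreconnected U)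
    (hF : DifferentiableOn ℂ F (U ×ˢ V)) (hG : DifferentiableOn ℂ G (U ×ˢ V)) {z₀ : ℂ}
    (hz₀ : z₀ ∈ U) (hW : W ∈ 𝓝 z₀) (h : EqOn F G (W ×ˢ V)) : EqOn F G (U ×ˢ V) := by
  rintro ⟨z, w⟩ ⟨hz, hw⟩
  have hslice : ∀ H : ℂ × ℂ → E, DifferentiableOn ℂ H (U ×ˢ V) →
      AnalyticOnNhd ℂ (fun z => H (z, w)) U := fun H hH =>
    (hH.comp (by fun_prop : Differentiable ℂ fun z : ℂ => (z, w)).differentiableOn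
      fun z hz => mk_mem_prod hz hw).analyticOnNhd hU
  exact (hslice F hF).eqOn_of_preconnected_of_eventuallyEq (hslice G hG) hU' hz₀
    (Filter.eventually_of_mem hW fun z hz => h (mk_mem_prod hz hw)) hz

theorem DifferentiableOn.piecewise_of_eqOn_inter {𝕜 E F : Type*} [NontriviallyNormedField 𝕜]
    [NormedAddCommGroup E] [NormedSpace 𝕜 E] [NormedAddCommGroup F] [NormedSpace 𝕜 F]
    {f g : E → F} {A B : Set E} [∀ x, Decidable (x ∈ A)] (hA : IsOpen A) (hB : IsOpen B)
    (hf : DifferentiableOn 𝕜 f A) (hg : DifferentiableOn 𝕜 g B) (hfg : EqOn f g (A ∩ B)) :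
    DifferentiableOn 𝕜 (A.piecewise f g) (A ∪ B) := by
  rintro x (hx | hx)
  · refine ((hf.differentiableAt (hA.mem_nhds hx)).congr_of_eventuallyEq ?_).differentiableWithinAt
    filter_upwards [hA.mem_nhds hx] with y hy using piecewise_eq_of_mem _ _ _ hy
  · refine ((hg.differentiableAt (hB.mem_nhds hx)).congr_of_eventuallyEq ?_).differentiableWithinAt
    filter_upwards [hB.mem_nhds hx] with y hy
    by_cases hyA : y ∈ A
    · rw [piecewise_eq_of_mem _ _ _ hyA, hfg ⟨hyA, hy⟩]
    · exact piecewise_eq_of_notMem _ _ _ hyA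

theorem isOpen_hartogsFigure (ε : ℝ) : IsOpen (hartogsFigure ε) := by
  have h₁ : Continuous fun p : ℂ × ℂ => ‖p.1‖ := by fun_prop
  have h₂ : Continuous fun p : ℂ × ℂ => ‖p.2‖ := by fun_prop
  exact ((isOpen_lt h₁ continuous_const).inter (isOpen_lt h₂ continuous_const)).inter
    ((isOpen_lt h₁ continuous_const).union (isOpen_lt continuous_const h₂))

theorem ball_prod_sphere_subset_hartogsFigure {ε r : ℝ} (hεr : 1 - ε < r) (hr1 : r < 1) :
    ball (0 : ℂ) 1 ×ˢ sphere (0 : ℂ) r ⊆ hartogsFigure ε := fun p ⟨hz, hw⟩ => by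
  rw [mem_sphere_zero_iff_norm] at hw
  exact ⟨⟨mem_ball_zero_iff.1 hz, hw ▸ hr1⟩, Or.inr (hw ▸ hεr)⟩

theorem ball_prod_ball_union_hartogsFigure {ε r : ℝ} (hεr : 1 - ε < r) (hr1 : r ≤ 1) :
    ball (0 : ℂ) 1 ×ˢ ball (0 : ℂ) r ∪ hartogsFigure ε = bidisk := by
  ext ⟨z, w⟩
  simp only [bidisk, hartogsFigure, mem_union, mem_prod, mem_ball_zero_iff, mem_ofPred_eq]
  constructor
  · rintro (⟨hz, hw⟩ | ⟨h, -⟩)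
    exacts [⟨hz, hw.trans_le hr1⟩, h]
  · rintro ⟨hz, hw⟩
    by_cases hwr : ‖w‖ < r
    · exact Or.inl ⟨hz, hwr⟩
    · exact Or.inr ⟨⟨hz, hw⟩, Or.inr (by linarith)⟩

theorem cauchyIntegralSnd_eqOn_hartogsFigure {ε r : ℝ} (hε : 0 < ε) (hεr : 1 - ε < r)
    (hr1 : r < 1) {f : ℂ × ℂ → ℂ} (hf : DifferentiableOn ℂ f (hartogsFigure ε)) :
    EqOn (cauchyIntegralSnd f 0 r) f (ball (0 : ℂ) 1 ×ˢ ball (0 : ℂ) r ∩ hartogsFigure ε) := by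
  have hF := differentiableOn_cauchyIntegralSnd (isOpen_hartogsFigure ε) hf
    (ball_prod_sphere_subset_hartogsFigure hεr hr1)
  have h_small : EqOn (cauchyIntegralSnd f 0 r) f (ball 0 (min ε 1) ×ˢ ball 0 r) := by
    rintro ⟨z, w⟩ ⟨hz, hw⟩
    rw [mem_ball_zero_iff, lt_min_iff] at hz
    have hmaps : MapsTo (fun ζ => (z, ζ)) (closedBall 0 r) (hartogsFigure ε) := fun ζ hζ =>
      ⟨⟨hz.2, (mem_closedBall_zero_iff.1 hζ).trans_lt hr1⟩, Or.inl hz.1⟩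
    exact cauchyIntegralSnd_eq (hf.comp (by fun_prop) hmaps) hw
  have h_annulus : EqOn (cauchyIntegralSnd f 0 r) f
      (ball 0 1 ×ˢ {w : ℂ | 1 - ε < ‖w‖ ∧ ‖w‖ < r}) :=
    eqOn_prod_of_eqOn_nhds_prod isOpen_ball (convex_ball 0 1).isPreconnected
      (hF.mono (prod_mono subset_rfl fun w hw => mem_ball_zero_iff.2 hw.2))
      (hf.mono fun p ⟨hz, hw⟩ => ⟨⟨mem_ball_zero_iff.1 hz, hw.2.trans hr1⟩, Or.inr hw.1⟩)
      (mem_ball_self one_pos) (ball_mem_nhds 0 (lt_min hε one_pos))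
      (h_small.mono (prod_mono subset_rfl fun w hw => mem_ball_zero_iff.2 hw.2))
  rintro ⟨z, w⟩ ⟨⟨hz, hw⟩, -, hz' | hw'⟩
  · exact h_small ⟨mem_ball_zero_iff.2 (lt_min hz' (mem_ball_zero_iff.1 hz)), hw⟩
  · exact h_annulus ⟨hz, hw', mem_ball_zero_iff.1 hw⟩

theorem hartogs_extension_general (ε : ℝ) (hε0 : 0 < ε)
    (f : ℂ × ℂ → ℂ) (hf : DifferentiableOn ℂ f (hartogsFigure ε)) :
    ∃ F : ℂ × ℂ → ℂ, DifferentiableOn ℂ F bidisk ∧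
      Set.EqOn F f (hartogsFigure ε) := by
  classical
  obtain ⟨r, hεr, hr1⟩ : ∃ r, 1 - ε < r ∧ r < 1 := ⟨1 - ε / 2, by linarith, by linarith⟩
  set A := ball (0 : ℂ) 1 ×ˢ ball (0 : ℂ) r
  have hF := differentiableOn_cauchyIntegralSnd (isOpen_hartogsFigure ε) hf
    (ball_prod_sphere_subset_hartogsFigure hεr hr1)
  have hFf := cauchyIntegralSnd_eqOn_hartogsFigure hε0 hεr hr1 hf
  refine ⟨A.piecewise (cauchyIntegralSnd f 0 r) f, ?_, fun p hp => ?_⟩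
  · rw [← ball_prod_ball_union_hartogsFigure hεr hr1.le]
    exact hF.piecewise_of_eqOn_inter (isOpen_ball.prod isOpen_ball) (isOpen_hartogsFigure ε) hf hFf
  · by_cases hpA : p ∈ A
    · rw [piecewise_eq_of_mem _ _ _ hpA]
      exact hFf ⟨hpA, hp⟩
    · exact piecewise_eq_of_notMem _ _ _ hpA

/-- Every function holomorphic on the Hartogs figure `H_ε` extends holomorphically
to the bidisk. -/
theorem hartogs_extension (ε : ℝ) (hε0 : 0 < ε) (hε1 : ε < 1)
    (f : ℂ × ℂ → ℂ) (hf : DifferentiableOn ℂ f (hartogsFigure ε)) :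
    ∃ F : ℂ × ℂ → ℂ, DifferentiableOn ℂ F bidisk ∧
      Set.EqOn F f (hartogsFigure ε) :=
  hartogs_extension_general ε hε0 f hf
end

section
/- Let n ≥ 1 and let k₁, …, k_{2n} be positive integers. Then the product A = B(k₁) · B(k₂) · ⋯ · B(k_{2n}) of the integer matrices B(k) = [[0, 1], [1, k]] satisfies det A = 1 and trace A > 2; in particular A belongs to SL(2, ℤ) and is hyperbolic. -/
/-!
Each factor `B(k) = !![0, 1; 1, k]` has determinant `-1`, so an even product has determinant `1`.
For the trace: all factors are entrywise nonnegative and multiplication of nonnegative matrices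
is entrywise monotone, so `B(k₁) ⋯ B(k₂ₙ)` dominates `B(1) ^ (2n) = C ^ n` entrywise, where
`C = B(1) ^ 2 = !![1, 1; 1, 2]`. Since `C` dominates the identity, `C ^ n` dominates `C`, whose
trace is `3`.
-/

open Matrix

section EntrywiseOrder

variable {l m n R : Type*} [Fintype m] [Semiring R] [PartialOrder R] [IsOrderedRing R]

theorem Matrix.mul_apply_nonneg {A : Matrix l m R} {B : Matrix m n R} (hA : ∀ i j, 0 ≤ A i j)
    (hB : ∀ i j, 0 ≤ B i j) (i : l) (j : n) : 0 ≤ (A * B) i j :=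
  Finset.sum_nonneg fun t _ => mul_nonneg (hA i t) (hB t j)

theorem Matrix.mul_apply_le_mul_apply {A A' : Matrix l m R} {B B' : Matrix m n R}
    (hA₀ : ∀ i j, 0 ≤ A i j) (hA : ∀ i j, A i j ≤ A' i j) (hB₀ : ∀ i j, 0 ≤ B i j)
    (hB : ∀ i j, B i j ≤ B' i j) (i : l) (j : n) : (A * B) i j ≤ (A' * B') i j :=
  Finset.sum_le_sum fun t _ =>
    mul_le_mul (hA i t) (hB t j) (hB₀ t j) ((hA₀ i t).trans (hA i t))

end EntrywiseOrder

section SquareEntrywiseOrder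

variable {ι R : Type*} [DecidableEq ι] [Semiring R] [PartialOrder R] [IsOrderedRing R]

theorem Matrix.one_apply_nonneg (i j : ι) : 0 ≤ (1 : Matrix ι ι R) i j := by
  rw [one_apply]
  split_ifs <;> simp

variable [Fintype ι]

theorem Matrix.prod_ofFn_apply_nonneg {k : ℕ} {f : Fin k → Matrix ι ι R}
    (hf : ∀ t i j, 0 ≤ f t i j) (i j : ι) : 0 ≤ (List.ofFn f).prod i j := by
  induction k generalizing i j with
  | zero => exact one_apply_nonneg i j
  | succ k ih =>
    rw [List.ofFn_succ, List.prod_cons]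
    exact mul_apply_nonneg (hf 0) (ih fun t => hf t.succ) i j

theorem Matrix.prod_ofFn_apply_le {k : ℕ} {f g : Fin k → Matrix ι ι R}
    (hf : ∀ t i j, 0 ≤ f t i j) (hfg : ∀ t i j, f t i j ≤ g t i j) (i j : ι) :
    (List.ofFn f).prod i j ≤ (List.ofFn g).prod i j := by
  induction k generalizing i j with
  | zero => rfl
  | succ k ih =>
    simp only [List.ofFn_succ, List.prod_cons]
    exact mul_apply_le_mul_apply (hf 0) (hfg 0) (prod_ofFn_apply_nonneg fun t => hf t.succ)
      (ih (fun t => hf t.succ) fun t => hfg t.succ) i j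

variable {M : Matrix ι ι R}

theorem Matrix.one_apply_le_pow_apply (hM : ∀ i j, (1 : Matrix ι ι R) i j ≤ M i j) (k : ℕ)
    (i j : ι) : (1 : Matrix ι ι R) i j ≤ (M ^ k) i j := by
  induction k generalizing i j with
  | zero => rfl
  | succ k ih =>
    rw [pow_succ, ← one_mul (1 : Matrix ι ι R)]
    exact mul_apply_le_mul_apply one_apply_nonneg ih one_apply_nonneg hM i j

theorem Matrix.apply_le_pow_apply (hM : ∀ i j, (1 : Matrix ι ι R) i j ≤ M i j) {k : ℕ}
    (hk : k ≠ 0) (i j : ι) : M i j ≤ (M ^ k) i j := by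
  obtain ⟨k, rfl⟩ := Nat.exists_eq_succ_of_ne_zero hk
  have hM₀ i j : 0 ≤ M i j := (one_apply_nonneg i j).trans (hM i j)
  simpa only [mul_one, ← pow_succ'] using
    mul_apply_le_mul_apply hM₀ (fun _ _ => le_rfl) one_apply_nonneg
      (one_apply_le_pow_apply hM k) i j

end SquareEntrywiseOrder

theorem det_prod_dloussky {m : ℕ} (k : Fin m → ℤ) :
    (List.ofFn fun i => !![(0 : ℤ), 1; 1, k i]).prod.det = (-1) ^ m := by
  rw [← coe_detMonoidHom, map_list_prod, List.map_ofFn]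
  simp [Function.comp_def, det_fin_two_of]

theorem fibonacci_pow_apply_le_prod_dloussky {m : ℕ} (k : Fin m → ℤ) (hk : ∀ i, 0 < k i)
    (i j : Fin 2) :
    (!![(0 : ℤ), 1; 1, 1] ^ m) i j ≤
      (List.ofFn fun t => !![(0 : ℤ), 1; 1, k t]).prod i j := by
  rw [← List.prod_replicate, ← List.ofFn_const]
  refine prod_ofFn_apply_le (fun _ i j => ?_) (fun t i j => ?_) i j
  · fin_cases i <;> fin_cases j <;> simp
  · fin_cases i <;> fin_cases j <;> simp [Order.one_le_iff_pos, hk t]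

/-- An even Dloussky matrix, i.e. a product `B(k₁) ⋯ B(k_{2n})` of an even number of
matrices `B(k) = [[0,1],[1,k]]` with `k` a positive integer, has determinant `1` and
trace `> 2`; in particular it is a hyperbolic element of `SL(2, ℤ)`. -/
theorem even_dloussky_matrix_hyperbolic (n : ℕ) (hn : 1 ≤ n)
    (k : Fin (2 * n) → ℤ) (hk : ∀ i, 0 < k i)
    (A : Matrix (Fin 2) (Fin 2) ℤ)
    (hA : A = (List.ofFn fun i => !![(0 : ℤ), 1; 1, k i]).prod) :
    A.det = 1 ∧ 2 < A.trace := by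
  subst hA
  refine ⟨by rw [det_prod_dloussky, pow_mul]; norm_num, ?_⟩
  set C : Matrix (Fin 2) (Fin 2) ℤ := !![1, 1; 1, 2]
  have hC : !![(0 : ℤ), 1; 1, 1] ^ (2 * n) = C ^ n := by
    rw [pow_mul]
    congr 1
    ext i j
    fin_cases i <;> fin_cases j <;> rfl
  have hC_ge_one i j : (1 : Matrix (Fin 2) (Fin 2) ℤ) i j ≤ C i j := by
    fin_cases i <;> fin_cases j <;> simp [C]
  have hle i j := (apply_le_pow_apply hC_ge_one (by omega : n ≠ 0) i j).trans
    (hC ▸ fibonacci_pow_apply_le_prod_dloussky k hk i j)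
  have h00 := hle 0 0
  have h11 := hle 1 1
  simp only [C, of_apply, cons_val', cons_val_zero, cons_val_one, empty_val'] at h00 h11
  rw [trace_fin_two]
  omega
end
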